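/- The Paley tournament P_7 does not have the strong EH-property. -/

import Mathlib

/-- A tournament on vertex set `Fin n`. -/
structure Tournament (n : ℕ) where
  adj : Fin n → Fin n → Prop
  irrefl : ∀ v, ¬ adj v v
  total : ∀ u v : Fin n, u ≠ v → (adj u v ↔ ¬ adj v u)

namespace Tournament

/-- `G` contains `H` as a subtournament. -/
def Contains {n m : ℕ} (G : Tournament n) (H : Tournament m) : Prop :=
  ∃ f : Fin m → Fin n, Function.Injective f ∧ ∀ u v, H.adj u v ↔ G.adj (f u) (f v)

/-- `G` has a pure pair of order at least `t`. -/
def HasPurePair {n : ℕ} (G : Tournament n) (t : ℝ) : Prop :=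
  ∃ A B : Finset (Fin n), Disjoint A B ∧ (∀ a ∈ A, ∀ b ∈ B, G.adj a b) ∧
    t ≤ A.card ∧ t ≤ B.card

/-- The strong Erdős–Hajnal property for a tournament. -/
def StrongEH {m : ℕ} (H : Tournament m) : Prop :=
  ∃ c : ℝ, 0 < c ∧ ∀ (n : ℕ) (G : Tournament n), ¬ G.Contains H → 1 < n →
    G.HasPurePair (c * n)

/-- The reverse tournament: all edges reversed. -/
def rev {n : ℕ} (G : Tournament n) : Tournament n where
  adj i j := G.adj j i
  irrefl v := G.irrefl v
  total u v h := by have := G.total v u (Ne.symm h); tauto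

/-- Isomorphism of tournaments. -/
def Iso {n m : ℕ} (G : Tournament n) (H : Tournament m) : Prop :=
  ∃ e : Fin n ≃ Fin m, ∀ u v, G.adj u v ↔ H.adj (e u) (e v)

/-- The backedge graph of `H` under the numbering `σ`: position `i` carries the vertex `σ i`,
and positions `i < j` are adjacent iff the vertex `σ i` is adjacent from `σ j` in `H`. -/
def backedge {m : ℕ} (H : Tournament m) (σ : Equiv.Perm (Fin m)) :
    SimpleGraph (Fin m) where
  Adj i j := (i < j ∧ H.adj (σ j) (σ i)) ∨ (j < i ∧ H.adj (σ i) (σ j))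
  symm := ⟨by intro i j h; tauto⟩
  loopless := ⟨by intro i h; rcases h with ⟨h, _⟩ | ⟨h, _⟩ <;> exact absurd h (lt_irrefl i)⟩

/-- The number of backedges of the numbering `σ` of `H`
(the number of edges of the backedge graph). -/
noncomputable def backCount {m : ℕ} (H : Tournament m) (σ : Equiv.Perm (Fin m)) : ℕ :=
  Nat.card {p : Fin m × Fin m | p.1 < p.2 ∧ H.adj (σ p.2) (σ p.1)}

end Tournament
/-- The Paley tournament `P₇` on `{0,…,6}`:
`j` is adjacent from `i` iff `j - i ≡ 1, 2, 4 (mod 7)`. -/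
def P7 : Tournament 7 where
  adj i j := (j.val + 7 - i.val) % 7 = 1 ∨ (j.val + 7 - i.val) % 7 = 2 ∨
    (j.val + 7 - i.val) % 7 = 4
  irrefl := by decide
  total := by decide

/-!
Every out-neighbourhood of `P₇` is a cyclic triangle. Hence in any numbering of `P₇` the last
vertex, together with a backward arc of its out-neighbourhood, spans a triangle of the backedge
graph. So if `G` is a triangle-free graph on `Fin n`, the tournament whose backward arcs are the
edges of `G` is `P₇`-free. If moreover `G` has no anticomplete pair of order `k`, that tournament
has no pure pair of order `3k`: for a pure pair `(A, B)`, the vertices of `B` before `max A` are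
neighbours of `max A`, so fewer than `2k` of them, and the others are anticomplete to `A`.

Such graphs with `k = o(n)` come from Erdős' deletion method: in the random graph
`G(m⁶, 1/(3m⁴))`, with probability at least `1/2` all pairs of disjoint `3m⁵`-sets span an edge,
and with probability close to `1` there are fewer than `m⁶/6` triangles; deleting every vertex of
a triangle leaves more than `m⁶/2` vertices.
-/

open Finset

namespace SimpleGraph

variable {V W : Type*}

def HasAnticompletePair (G : SimpleGraph V) (k : ℕ) : Prop :=
  ∃ A B : Finset V, Disjoint A B ∧ k ≤ #A ∧ k ≤ #B ∧ ∀ a ∈ A, ∀ b ∈ B, ¬ G.Adj a b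

theorem pos_of_not_hasAnticompletePair {G : SimpleGraph V} {k : ℕ}
    (h : ¬ G.HasAnticompletePair k) : 0 < k :=
  Nat.pos_of_ne_zero fun hk => h ⟨∅, ∅, disjoint_empty_left _, by simp [hk], by simp [hk], by simp⟩

theorem IsIndepSet.hasAnticompletePair [DecidableEq V] {G : SimpleGraph V} {S : Finset V}
    {k : ℕ} (hS : G.IsIndepSet S) (hk : 2 * k ≤ #S) : G.HasAnticompletePair k := by
  obtain ⟨A, hAS, hA⟩ := exists_subset_card_eq (show k ≤ #S by omega)
  obtain ⟨B, hBS, hB⟩ :=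
    exists_subset_card_eq (show k ≤ #(S \ A) by rw [card_sdiff_of_subset hAS]; omega)
  refine ⟨A, B, disjoint_of_subset_right hBS disjoint_sdiff, hA.ge, hB.ge, fun a ha b hb => ?_⟩
  obtain ⟨hbS, hbA⟩ := mem_sdiff.mp (hBS hb)
  exact hS (hAS ha) hbS (ne_of_mem_of_not_mem ha hbA)

theorem HasAnticompletePair.of_comap {G : SimpleGraph W} {k : ℕ} (e : V ↪ W)
    (h : (G.comap e).HasAnticompletePair k) : G.HasAnticompletePair k := by
  classical
  obtain ⟨A, B, hAB, hA, hB, hanti⟩ := h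
  refine ⟨A.map e, B.map e, ?_, by simpa using hA, by simpa using hB, by simpa using hanti⟩
  simpa [disjoint_map] using hAB

theorem exists_embedding_cliqueFree_three [Fintype V] [DecidableEq V] (G : SimpleGraph V)
    [DecidableRel G.Adj] :
    ∃ (M : ℕ) (e : Fin M ↪ V), Fintype.card V ≤ M + 3 * #(G.cliqueFinset 3) ∧
      (G.comap e).CliqueFree 3 := by
  set R := univ.filter fun v => ∀ t ∈ G.cliqueFinset 3, v ∉ t
  set e : Fin #R ↪ V := R.equivFin.symm.toEmbedding.trans (Function.Embedding.subtype _)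
  refine ⟨#R, e, ?_, fun t ht => ?_⟩
  · have hcompl : Rᶜ ⊆ (G.cliqueFinset 3).biUnion id := by
      intro v hv
      simpa [R] using hv
    calc Fintype.card V = #R + #Rᶜ := (card_add_card_compl R).symm
      _ ≤ #R + ∑ t ∈ G.cliqueFinset 3, #t := by
          gcongr; exact (card_le_card hcompl).trans card_biUnion_le
      _ = #R + 3 * #(G.cliqueFinset 3) := by
          rw [sum_congr rfl fun t ht => (mem_cliqueFinset_iff.mp ht).card_eq, sum_const,
            smul_eq_mul, mul_comm]
  · obtain ⟨x, hx⟩ : t.Nonempty := card_pos.mp (by rw [ht.card_eq]; norm_num)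
    have hmap : G.IsNClique 3 (t.map e) := (ht.map (f := e)).mono (map_comap_le e G)
    exact (mem_filter.mp (R.equivFin.symm x).2).2 _ (mem_cliqueFinset_iff.mpr hmap)
      (mem_map_of_mem e hx)

end SimpleGraph

namespace Tournament

variable {n : ℕ}

theorem HasPurePair.mono {G : Tournament n} {s t : ℝ} (h : G.HasPurePair t) (hst : s ≤ t) :
    G.HasPurePair s :=
  let ⟨A, B, hAB, hpure, hA, hB⟩ := h
  ⟨A, B, hAB, hpure, hst.trans hA, hst.trans hB⟩

theorem backedge_not_cliqueFree_three {H : Tournament (n + 1)}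
    (hH : ∀ c, ∃ x y z, H.adj c x ∧ H.adj c y ∧ H.adj c z ∧ H.adj x y ∧ H.adj y z ∧ H.adj z x)
    (σ : Equiv.Perm (Fin (n + 1))) : ¬ (H.backedge σ).CliqueFree 3 := by
  set c := σ (Fin.last n)
  obtain ⟨x, y, z, hx, hy, hz, hxy, hyz, hzx⟩ := hH c
  obtain ⟨u, v, hu, hv, huv, hback⟩ :
      ∃ u v, H.adj c u ∧ H.adj c v ∧ H.adj u v ∧ σ.symm v < σ.symm u := by
    by_contra! h
    have hxy' : σ.symm x = σ.symm y :=
      (h x y hx hy hxy).antisymm ((h y z hy hz hyz).trans (h z x hz hx hzx))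
    obtain rfl := σ.symm.injective hxy'
    exact H.irrefl x hxy
  have hlast : σ.symm u < Fin.last n := by
    refine (Fin.le_last _).lt_of_ne fun h => H.irrefl c ?_
    obtain rfl : u = c := σ.symm_apply_eq.mp h
    exact hu
  intro hfree
  refine hfree {σ.symm v, σ.symm u, Fin.last n} ?_
  rw [SimpleGraph.is3Clique_triple_iff]
  simp only [backedge, Equiv.apply_symm_apply]
  exact ⟨.inl ⟨hback, huv⟩, .inl ⟨hback.trans hlast, hv⟩, .inl ⟨hlast, hu⟩⟩

def ofGraph (G : SimpleGraph (Fin n)) : Tournament n where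
  adj u v := (u < v ∧ ¬ G.Adj u v) ∨ (v < u ∧ G.Adj u v)
  irrefl v := by simp
  total u v huv := by
    rcases huv.lt_or_gt with h | h <;> simp [h, h.not_gt, G.adj_comm]

variable {G : SimpleGraph (Fin n)} {u v : Fin n}

theorem ofGraph_adj_of_lt (h : u < v) : (ofGraph G).adj u v ↔ ¬ G.Adj u v := by
  simp [ofGraph, h, h.not_gt]

theorem ofGraph_adj_of_gt (h : v < u) : (ofGraph G).adj u v ↔ G.Adj u v := by
  simp [ofGraph, h, h.not_gt]

theorem not_contains_ofGraph {m : ℕ} {H : Tournament m}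
    (hH : ∀ σ, ¬ (H.backedge σ).CliqueFree 3) (hG : G.CliqueFree 3) :
    ¬ (ofGraph G).Contains H := by
  rintro ⟨f, hf, hadj⟩
  set σ := Tuple.sort f
  have hmono : StrictMono (f ∘ σ) :=
    (Tuple.monotone_sort f).strictMono_of_injective (hf.comp σ.injective)
  refine hH σ (hG.comap (SimpleGraph.isContained_iff_exists_le_comap.mpr
    ⟨⟨f ∘ σ, hmono.injective⟩, ?_⟩))
  rintro i j (⟨hij, h⟩ | ⟨hji, h⟩)
  · exact ((ofGraph_adj_of_gt (hmono hij)).mp ((hadj _ _).mp h)).symm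
  · exact (ofGraph_adj_of_gt (hmono hji)).mp ((hadj _ _).mp h)

theorem not_hasPurePair_ofGraph (hG : G.CliqueFree 3) {k : ℕ}
    (hk : ¬ G.HasAnticompletePair k) : ¬ (ofGraph G).HasPurePair (3 * k) := by
  rintro ⟨A, B, hAB, hpure, hA, hB⟩
  have hA' : 3 * k ≤ #A := by exact_mod_cast hA
  have hB' : 3 * k ≤ #B := by exact_mod_cast hB
  have hAne : A.Nonempty :=
    card_pos.mp (by linarith [SimpleGraph.pos_of_not_hasAnticompletePair hk])
  set a₀ := A.max' hAne
  have hindep : G.IsIndepSet (B.filter (· < a₀) : Set (Fin n)) :=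
    (G.isIndepSet_neighborSet_of_triangleFree hG a₀).mono fun b hb => by
      obtain ⟨hbB, hba⟩ := mem_filter.mp hb
      exact (ofGraph_adj_of_gt hba).mp (hpure a₀ (A.max'_mem hAne) b hbB)
  have hbefore : #(B.filter (· < a₀)) < 2 * k := by
    by_contra! h
    exact hk (hindep.hasAnticompletePair h)
  refine hk ⟨A, B.filter (¬ · < a₀), hAB.mono_right (filter_subset _ _), by omega, ?_, ?_⟩
  · have := B.card_filter_add_card_filter_not (· < a₀)
    omega
  · intro a ha b hb
    obtain ⟨hbB, hba⟩ := mem_filter.mp hb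
    have hab : a < b := (A.le_max' a ha).trans_lt <| (not_lt.mp hba).lt_of_ne
      (ne_of_mem_of_not_mem hbB (disjoint_left.mp hAB (A.max'_mem hAne))).symm
    exact (ofGraph_adj_of_lt hab).mp (hpure a ha b hbB)

end Tournament

theorem P7_backedge_not_cliqueFree_three (σ : Equiv.Perm (Fin 7)) :
    ¬ (P7.backedge σ).CliqueFree 3 :=
  Tournament.backedge_not_cliqueFree_three (by unfold P7; decide) σ

theorem card_filter_forall_apply_mem {α β : Type*} [Fintype α] [DecidableEq α] [Fintype β]
    [DecidableEq β] [Nonempty β] (S : Finset α) (T : Finset β) :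
    (#{F : α → β | ∀ a ∈ S, F a ∈ T} : ℝ) =
      (#T / Fintype.card β) ^ #S * Fintype.card (α → β) := by
  have hpi : ({F : α → β | ∀ a ∈ S, F a ∈ T} : Finset _) =
      Fintype.piFinset fun a => if a ∈ S then T else univ := by
    ext F
    simp only [mem_filter, mem_univ, true_and, Fintype.mem_piFinset]
    refine forall_congr' fun a => ?_
    split_ifs with h <;> simp [h]
  have hβ : (Fintype.card β : ℝ) ≠ 0 := by positivity
  rw [hpi, Fintype.card_piFinset, Fintype.card_fun, Nat.cast_prod, Nat.cast_pow]
  calc ∏ a, (#(if a ∈ S then T else univ) : ℝ)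
      = ∏ a, ((if a ∈ S then (#T / Fintype.card β : ℝ) else 1) * Fintype.card β) :=
        prod_congr rfl fun a _ => by split_ifs; exacts [(div_mul_cancel₀ _ hβ).symm, by simp]
    _ = _ := by rw [prod_mul_distrib, Fintype.prod_ite_mem, prod_const, prod_const, card_univ]

section RandomGraph

variable {V : Type*} {D : ℕ} [NeZero D]

theorem one_sub_one_div_mem_Icc : 1 - 1 / (D : ℝ) ∈ Set.Icc 0 1 :=
  ⟨sub_nonneg.mpr (div_le_one_of_le₀ (by exact_mod_cast NeZero.one_le) (by positivity)),
    sub_le_self _ (by positivity)⟩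

/-- For uniformly random `F`, this is the binomial random graph `G(|V|, 1/D)`. -/
def zeroGraph (F : Sym2 V → Fin D) : SimpleGraph V := SimpleGraph.fromEdgeSet {e | F e = 0}

theorem zeroGraph_adj {F : Sym2 V → Fin D} {u v : V} :
    (zeroGraph F).Adj u v ↔ u ≠ v ∧ F s(u, v) = 0 := by
  simp [zeroGraph, and_comm]

variable [Fintype V] [DecidableEq V]

instance (F : Sym2 V → Fin D) : DecidableRel (zeroGraph F).Adj :=
  fun _ _ => decidable_of_iff _ zeroGraph_adj.symm

theorem card_zeroGraph_anticomplete {A B : Finset V} (hAB : Disjoint A B) :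
    (#{F : Sym2 V → Fin D | ∀ a ∈ A, ∀ b ∈ B, ¬ (zeroGraph F).Adj a b} : ℝ) =
      (1 - 1 / D) ^ (#A * #B) * Fintype.card (Sym2 V → Fin D) := by
  have hinj : Set.InjOn (Function.uncurry Sym2.mk) ((A ×ˢ B : Finset (V × V)) : Set (V × V)) := by
    rintro ⟨a, b⟩ hab ⟨a', b'⟩ hab' h
    simp only [coe_product, Set.mem_prod, mem_coe] at hab hab'
    rcases Sym2.eq_iff.mp h with ⟨rfl, rfl⟩ | ⟨rfl, rfl⟩
    · rfl
    · exact (disjoint_left.mp hAB hab.1 hab'.2).elim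
  have hfilter :
      (univ.filter fun F : Sym2 V → Fin D => ∀ a ∈ A, ∀ b ∈ B, ¬ (zeroGraph F).Adj a b) =
        univ.filter fun F =>
          ∀ e ∈ (A ×ˢ B).image (Function.uncurry Sym2.mk), F e ∈ univ.erase 0 := by
    refine filter_congr fun F _ => ?_
    simp only [mem_image, mem_product, Prod.exists, Function.uncurry_apply_pair, mem_erase,
      mem_univ, and_true, forall_exists_index, and_imp]
    constructor
    · rintro h e a b ha hb rfl h0
      exact h a ha b hb
        (zeroGraph_adj.mpr ⟨ne_of_mem_of_not_mem ha (disjoint_right.mp hAB hb), h0⟩)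
    · exact fun h a ha b hb hab => h _ a b ha hb rfl (zeroGraph_adj.mp hab).2
  rw [hfilter, card_filter_forall_apply_mem, card_image_of_injOn hinj, card_product,
    card_erase_of_mem (mem_univ _), card_univ, Fintype.card_fin, Nat.cast_pred (NeZero.pos D),
    sub_div, div_self (NeZero.ne _)]

theorem card_zeroGraph_isClique (s : Finset V) :
    (#{F : Sym2 V → Fin D | (zeroGraph F).IsClique (s : Set V)} : ℝ) =
      (1 / D) ^ (#s).choose 2 * Fintype.card (Sym2 V → Fin D) := by
  have hfilter : (univ.filter fun F : Sym2 V → Fin D => (zeroGraph F).IsClique (s : Set V)) =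
      univ.filter fun F =>
        ∀ e ∈ s.offDiag.image (Function.uncurry Sym2.mk), F e ∈ ({0} : Finset (Fin D)) := by
    refine filter_congr fun F _ => ?_
    simp only [SimpleGraph.isClique_iff, Set.Pairwise, mem_coe, zeroGraph_adj, mem_image,
      mem_offDiag, Prod.exists, Function.uncurry_apply_pair, mem_singleton, forall_exists_index,
      and_imp]
    constructor
    · rintro h e a b ha hb hab rfl
      exact (h ha hb hab).2
    · exact fun h a ha b hb hab => ⟨hab, h _ a b ha hb hab rfl⟩
  rw [hfilter, card_filter_forall_apply_mem, Sym2.card_image_offDiag, card_singleton,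
    Fintype.card_fin, Nat.cast_one]

theorem sum_card_zeroGraph_cliqueFinset (k : ℕ) :
    ∑ F : Sym2 V → Fin D, (#((zeroGraph F).cliqueFinset k) : ℝ) =
      (Fintype.card V).choose k * (1 / D) ^ k.choose 2 * Fintype.card (Sym2 V → Fin D) := by
  have hclique (F : Sym2 V → Fin D) : (zeroGraph F).cliqueFinset k =
      (univ.powersetCard k).filter fun s : Finset V => (zeroGraph F).IsClique (s : Set V) := by
    ext s
    simp [SimpleGraph.isNClique_iff, and_comm]
  calc ∑ F : Sym2 V → Fin D, (#((zeroGraph F).cliqueFinset k) : ℝ)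
      = ∑ s ∈ (univ : Finset V).powersetCard k,
          (#{F : Sym2 V → Fin D | (zeroGraph F).IsClique (s : Set V)} : ℝ) := by
        simp only [hclique, card_filter, Nat.cast_sum, Nat.cast_ite, Nat.cast_one, Nat.cast_zero]
        exact sum_comm
    _ = _ := by
        rw [sum_congr rfl fun s hs => by rw [card_zeroGraph_isClique, mem_powersetCard_univ.mp hs],
          sum_const, card_powersetCard, card_univ, nsmul_eq_mul, mul_assoc]

open Classical in
theorem card_zeroGraph_hasAnticompletePair_le (k : ℕ) :
    (#{F : Sym2 V → Fin D | (zeroGraph F).HasAnticompletePair k} : ℝ) ≤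
      4 ^ Fintype.card V * (1 - 1 / D) ^ (k ^ 2) * Fintype.card (Sym2 V → Fin D) := by
  set P : Finset (Finset V × Finset V) :=
    univ.filter fun AB => Disjoint AB.1 AB.2 ∧ k ≤ #AB.1 ∧ k ≤ #AB.2
  have hsub : (univ.filter fun F : Sym2 V → Fin D => (zeroGraph F).HasAnticompletePair k) ⊆
      P.biUnion fun AB =>
        univ.filter fun F => ∀ a ∈ AB.1, ∀ b ∈ AB.2, ¬ (zeroGraph F).Adj a b := by
    intro F hF
    obtain ⟨A, B, hAB, hA, hB, hanti⟩ := (mem_filter.mp hF).2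
    exact mem_biUnion.mpr ⟨(A, B), mem_filter.mpr ⟨mem_univ _, hAB, hA, hB⟩,
      mem_filter.mpr ⟨mem_univ _, hanti⟩⟩
  obtain ⟨hp₀, hp₁⟩ := one_sub_one_div_mem_Icc (D := D)
  calc _ ≤ ∑ AB ∈ P, (#(univ.filter fun F : Sym2 V → Fin D =>
          ∀ a ∈ AB.1, ∀ b ∈ AB.2, ¬ (zeroGraph F).Adj a b) : ℝ) := by
        exact_mod_cast (card_le_card hsub).trans card_biUnion_le
    _ ≤ ∑ AB ∈ P, (1 - 1 / D : ℝ) ^ (k ^ 2) * Fintype.card (Sym2 V → Fin D) := by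
        refine sum_le_sum fun AB hAB => ?_
        obtain ⟨hd, hA, hB⟩ := (mem_filter.mp hAB).2
        rw [card_zeroGraph_anticomplete hd]
        gcongr ?_ * _
        exact pow_le_pow_of_le_one hp₀ hp₁ (sq k ▸ Nat.mul_le_mul hA hB)
    _ ≤ _ := by
        rw [sum_const, nsmul_eq_mul, mul_assoc]
        gcongr
        calc (#P : ℝ) ≤ Fintype.card (Finset V × Finset V) := by exact_mod_cast card_le_univ P
          _ = 4 ^ Fintype.card V := by
            rw [Fintype.card_prod, Fintype.card_finset, ← mul_pow]; norm_num

theorem exists_zeroGraph_not_hasAnticompletePair_card_cliqueFinset_lt {k : ℕ} {t : ℝ}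
    (ht : 0 < t)
    (h : 4 ^ Fintype.card V * (1 - 1 / D) ^ (k ^ 2) + (Fintype.card V).choose 3 / D ^ 3 / t < 1) :
    ∃ F : Sym2 V → Fin D, ¬ (zeroGraph F).HasAnticompletePair k ∧
      (#((zeroGraph F).cliqueFinset 3) : ℝ) < t := by
  classical
  set Ω := Fintype.card (Sym2 V → Fin D)
  have hΩ : (0 : ℝ) < Ω := by exact_mod_cast Fintype.card_pos
  -- The average over `F` of `[HasAnticompletePair k] + #triangles / t` is below `1`.
  have hsum : ∑ F : Sym2 V → Fin D, ((if (zeroGraph F).HasAnticompletePair k then 1 else 0) +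
      (#((zeroGraph F).cliqueFinset 3) : ℝ) / t) < ∑ _F : Sym2 V → Fin D, 1 := by
    rw [sum_add_distrib, sum_boole, ← sum_div, sum_card_zeroGraph_cliqueFinset, sum_const,
      card_univ, nsmul_one, show (3 : ℕ).choose 2 = 3 from rfl]
    calc _ ≤ 4 ^ Fintype.card V * (1 - 1 / D) ^ (k ^ 2) * Ω +
          (Fintype.card V).choose 3 * (1 / D) ^ 3 * Ω / t := by
          gcongr; exact card_zeroGraph_hasAnticompletePair_le k
      _ = (4 ^ Fintype.card V * (1 - 1 / D) ^ (k ^ 2) +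
          (Fintype.card V).choose 3 / D ^ 3 / t) * Ω := by ring
      _ < 1 * Ω := by gcongr
      _ = Ω := one_mul _
  obtain ⟨F, -, hF⟩ := exists_lt_of_sum_lt hsum
  have htri : 0 ≤ (#((zeroGraph F).cliqueFinset 3) : ℝ) / t := by positivity
  refine ⟨F, fun hbad => ?_, ?_⟩
  · rw [if_pos hbad] at hF
    linarith
  · have : (#((zeroGraph F).cliqueFinset 3) : ℝ) / t < 1 := by split_ifs at hF <;> linarith
    rwa [div_lt_one ht] at this

end RandomGraph

open SimpleGraph in
theorem exists_cliqueFree_three_not_hasAnticompletePair (m : ℕ) (hm : 1 ≤ m) :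
    ∃ M, m ^ 6 < 2 * M ∧ ∃ G : SimpleGraph (Fin M),
      G.CliqueFree 3 ∧ ¬ G.HasAnticompletePair (3 * m ^ 5) := by
  -- With `N = m⁶`, `D = 3m⁴`, `k = 3m⁵`: `k² = 3ND` beats the `4^N` pairs `(A, B)`,
  -- and `N² / D³ = 1/27`.
  have : NeZero (3 * m ^ 4) := ⟨by positivity⟩
  have hsparse :
      (4 : ℝ) ^ m ^ 6 * (1 - 1 / ((3 * m ^ 4 : ℕ) : ℝ)) ^ (3 * m ^ 5) ^ 2 ≤ 1 / 2 := by
    have hD : (1 - 1 / ((3 * m ^ 4 : ℕ) : ℝ)) ^ (3 * m ^ 4) ≤ 1 / 2 :=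
      (Real.one_sub_div_pow_le_exp_neg (by exact_mod_cast NeZero.one_le)).trans
        Real.exp_neg_one_lt_half.le
    have hp := (one_sub_one_div_mem_Icc (D := 3 * m ^ 4)).1
    calc (4 : ℝ) ^ m ^ 6 * (1 - 1 / ((3 * m ^ 4 : ℕ) : ℝ)) ^ (3 * m ^ 5) ^ 2
        = 4 ^ m ^ 6 * ((1 - 1 / ((3 * m ^ 4 : ℕ) : ℝ)) ^ (3 * m ^ 4)) ^ (3 * m ^ 6) := by ring
      _ ≤ 4 ^ m ^ 6 * (1 / 2) ^ (3 * m ^ 6) := by gcongr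
      _ = (1 / 2) ^ m ^ 6 := by rw [pow_mul, ← mul_pow]; norm_num
      _ ≤ 1 / 2 := pow_le_of_le_one (by norm_num) (by norm_num) (by positivity)
  have htriangles :
      ((m ^ 6).choose 3 : ℝ) / ((3 * m ^ 4 : ℕ) : ℝ) ^ 3 / ((m ^ 6 : ℕ) / 6) ≤ 1 / 27 := by
    have hchoose := Nat.choose_le_pow_div (α := ℝ) 3 (m ^ 6)
    rw [div_div, div_le_iff₀ (by positivity)]
    rw [show ((Nat.factorial 3 : ℕ) : ℝ) = 6 by norm_num [Nat.factorial]] at hchoose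
    push_cast at hchoose ⊢
    calc _ ≤ ((m : ℝ) ^ 6) ^ 3 / 6 := hchoose
      _ = _ := by field_simp; ring
  obtain ⟨F, hF, htri⟩ := exists_zeroGraph_not_hasAnticompletePair_card_cliqueFinset_lt
    (V := Fin (m ^ 6)) (D := 3 * m ^ 4) (k := 3 * m ^ 5) (t := ((m ^ 6 : ℕ) : ℝ) / 6)
    (by positivity) (by rw [Fintype.card_fin]; linarith)
  obtain ⟨M, e, hM, hfree⟩ := (zeroGraph F).exists_embedding_cliqueFree_three
  refine ⟨M, ?_, _, hfree, fun h => hF (h.of_comap e)⟩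
  rw [Fintype.card_fin] at hM
  have hM' : ((m ^ 6 : ℕ) : ℝ) ≤ M + 3 * #((zeroGraph F).cliqueFinset 3) := by
    exact_mod_cast hM
  exact_mod_cast (by linarith : ((m ^ 6 : ℕ) : ℝ) < 2 * M)

/-- The Paley tournament `P₇` does not have the strong EH-property. -/
theorem P7_not_strongEH : ¬ P7.StrongEH := by
  rintro ⟨c, hc, hP7⟩
  obtain ⟨n, hn⟩ := exists_nat_ge (18 / c)
  set m := n + 2
  have hcm : 18 ≤ c * m := by
    rw [div_le_iff₀ hc] at hn
    have : (n : ℝ) ≤ m := by norm_cast; omega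
    nlinarith
  obtain ⟨M, hM, G, hG, hGk⟩ := exists_cliqueFree_three_not_hasAnticompletePair m (by omega)
  have hM1 : 1 < M := by
    have : 2 ^ 6 ≤ m ^ 6 := Nat.pow_le_pow_left (by omega) 6
    omega
  have hpure := hP7 M (Tournament.ofGraph G)
    (Tournament.not_contains_ofGraph P7_backedge_not_cliqueFree_three hG) hM1
  refine Tournament.not_hasPurePair_ofGraph hG hGk (hpure.mono ?_)
  have hM' : (m : ℝ) ^ 6 < 2 * M := by exact_mod_cast hM
  have hm5 : (0 : ℝ) ≤ (m : ℝ) ^ 5 := by positivity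
  calc 3 * ((3 * m ^ 5 : ℕ) : ℝ) = 9 * m ^ 5 := by push_cast; ring
    _ ≤ c * m * m ^ 5 / 2 := by nlinarith
    _ ≤ c * M := by nlinarith
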